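/- arXiv:1207.4967 — 2 statements merged into one kernel-verified Lean document; each statement's English description precedes it below -/
import Mathlib

section
/- Consider the closed-loop greedy quantization dynamics: x[0] = 0, x[n+1] = A x[n] + B(r[n] - u[n]) with u[n] = K((CB)⁻¹ C A x[n] + r[n]), where K rounds to the nearest point of δℤ. Then the output q[n] = C x[n] satisfies |q[n]| ≤ |CB| δ/2 for all n ≥ 0. -/
open Matrix

/-! The greedy rule picks `u n` so that the quantizer input `θ = (CB)⁻¹ C A x n + r n` is exactly
the value that would make the next output vanish: one step of the loop gives
`q (n+1) = CB · (θ - K θ)`, so the output is `CB` times a rounding error of size at most `δ/2`. -/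

section GreedyStep

variable {𝕜 ι κ : Type*} [Fintype ι]

lemma mul_mul_add_smul_apply [CommRing 𝕜] (A : Matrix ι ι 𝕜) (B v : Matrix ι κ 𝕜)
    (C : Matrix κ ι 𝕜) (s : 𝕜) (i j : κ) :
    (C * (A * v + s • B)) i j = (C * A * v) i j + s * (C * B) i j := by
  rw [Matrix.mul_add, Matrix.mul_smul, Matrix.mul_assoc C A v, Matrix.add_apply,
    Matrix.smul_apply, smul_eq_mul]

lemma greedy_step_output_eq [Field 𝕜] (A : Matrix ι ι 𝕜) (B v : Matrix ι κ 𝕜)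
    (C : Matrix κ ι 𝕜) (i j : κ) (hCB : (C * B) i j ≠ 0) (r u : 𝕜) :
    (C * (A * v + (r - u) • B)) i j =
      (C * B) i j * (((C * B) i j)⁻¹ * (C * A * v) i j + r - u) := by
  rw [mul_mul_add_smul_apply, mul_sub, mul_add, mul_inv_cancel_left₀ hCB]
  ring

end GreedyStep

theorem greedy_adc_output_bound_general
    (m : ℕ) (A : Matrix (Fin m) (Fin m) ℝ)
    (B : Matrix (Fin m) (Fin 1) ℝ) (C : Matrix (Fin 1) (Fin m) ℝ)
    (cb : ℝ) (hcb : cb = (C * B) 0 0) (hcb0 : cb ≠ 0)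
    (δ : ℝ)
    (K : ℝ → ℝ) (hK : ∀ θ : ℝ, |θ - K θ| ≤ δ / 2)
    (r : ℕ → ℝ)
    (x : ℕ → Matrix (Fin m) (Fin 1) ℝ) (u q : ℕ → ℝ)
    (hx0 : x 0 = 0)
    (hu : ∀ n, u n = K (cb⁻¹ * (C * A * x n) 0 0 + r n))
    (hx : ∀ n, x (n + 1) = A * x n + (r n - u n) • B)
    (hq : ∀ n, q n = (C * x n) 0 0) :
    ∀ n, |q n| ≤ |cb| * δ / 2 := by
  subst hcb
  rintro (_ | n)
  · have hδ : 0 ≤ δ / 2 := (abs_nonneg _).trans (hK 0)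
    rw [hq, hx0, Matrix.mul_zero, Matrix.zero_apply, abs_zero, mul_div_assoc]
    exact mul_nonneg (abs_nonneg _) hδ
  · have hstep :
        q (n + 1) = (C * B) 0 0 * (((C * B) 0 0)⁻¹ * (C * A * x n) 0 0 + r n - u n) := by
      rw [hq, hx, greedy_step_output_eq A B (x n) C 0 0 hcb0]
    rw [hstep, hu, abs_mul, mul_div_assoc]
    exact mul_le_mul_of_nonneg_left (hK _) (abs_nonneg _)

/-- Closed-loop greedy quantization dynamics: with `x 0 = 0`,
`x (n+1) = A x n + B (r n - u n)`, `u n = K ((CB)⁻¹ C A x n + r n)` where `K`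
rounds to the nearest point of `δℤ` (so `|θ - K θ| ≤ δ/2`), the output
`q n = C x n` satisfies `|q n| ≤ |CB| δ / 2` for all `n`. -/
theorem greedy_adc_output_bound
    (m : ℕ) (A : Matrix (Fin m) (Fin m) ℝ)
    (B : Matrix (Fin m) (Fin 1) ℝ) (C : Matrix (Fin 1) (Fin m) ℝ)
    (cb : ℝ) (hcb : cb = (C * B) 0 0) (hcb0 : cb ≠ 0)
    (δ : ℝ) (hδ : 0 < δ)
    (K : ℝ → ℝ) (hK : ∀ θ : ℝ, |θ - K θ| ≤ δ / 2)
    (r : ℕ → ℝ)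
    (x : ℕ → Matrix (Fin m) (Fin 1) ℝ) (u q : ℕ → ℝ)
    (hx0 : x 0 = 0)
    (hu : ∀ n, u n = K (cb⁻¹ * (C * A * x n) 0 0 + r n))
    (hx : ∀ n, x (n + 1) = A * x n + (r n - u n) • B)
    (hq : ∀ n, q n = (C * x n) 0 0) :
    ∀ n, |q n| ≤ |cb| * δ / 2 :=
  greedy_adc_output_bound_general m A B C cb hcb hcb0 δ K hK r x u q hx0 hu hx hq
end

section
/- For any causal ADC policy producing outputs u[n] in the lattice δℤ driving the state-space system x[0]=0, x[n+1]=Ax[n]+B(r[n]-u[n]), q[n]=Cx[n], there exists an input sequence r with values in [-1,1] such that |q[n]| ≥ |CB| δ/2 for all n ≥ 1. The adversarial input is r[n] = (2ρ(x[n])+1)δ/2 - (CB)⁻¹ C A x[n], where ρ(x) is an integer k minimizing |(2k+1)δ/2 - (CB)⁻¹ C A x|. -/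
/-!
The adversary picks `r[n]` so that `C A x[n] + CB·r[n]` lands on the half-integer lattice
`CB·δ(ℤ + 1/2)`; this needs `|r[n]| ≤ δ/2 ≤ 1`. Since `u[n] ∈ δℤ`, the next output
`q[n+1] = CB·((k + 1/2)δ - u[n])` is then at least `|CB|δ/2` in absolute value. The choice of
`r[n]` depends on `x[n]`, which by causality of the policy depends only on `r[0], …, r[n-1]`,
so the whole input is a fixed point of a strictly causal map, which always exists.
-/

open Matrix

def StrictlyCausal {α β : Type*} (F : (ℕ → α) → ℕ → β) : Prop :=
  ∀ r r' n, (∀ k < n, r k = r' k) → F r n = F r' n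

namespace StrictlyCausal

variable {α β γ : Type*}

theorem comp {F : (ℕ → α) → ℕ → β} (hF : StrictlyCausal F) (f : β → γ) :
    StrictlyCausal fun r n => f (F r n) :=
  fun r r' n h => congrArg f (hF r r' n h)

theorem exists_fixedPoint [Nonempty α] {F : (ℕ → α) → ℕ → α} (hF : StrictlyCausal F) :
    ∃ r, F r = r := by
  -- `g n` holds the first `n` values of the fixed point, padded arbitrarily
  let g : ℕ → ℕ → α := fun n => Nat.rec (fun _ => Classical.arbitrary α)
    (fun n gn => Function.update gn n (F gn n)) n
  have hg : ∀ n, ∀ k < n, g n k = F (g k) k := by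
    intro n
    induction n with
    | zero => intro k hk; omega
    | succ n ih =>
      intro k hk
      show Function.update (g n) n (F (g n) n) k = _
      rcases Nat.lt_succ_iff_lt_or_eq.mp hk with hkn | rfl
      · rw [Function.update_of_ne hkn.ne, ih k hkn]
      · rw [Function.update_self]
  refine ⟨fun k => F (g k) k, funext fun n => ?_⟩
  exact hF _ _ n fun k hk => (hg n k hk).symm

end StrictlyCausal

section ClosedLoop

variable {ι : Type*} [Fintype ι] (A : Matrix ι ι ℝ) (B : Matrix ι (Fin 1) ℝ)
  (Υ : (ℕ → ℝ) → ℕ → ℝ)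

noncomputable def closedLoopState (r : ℕ → ℝ) : ℕ → Matrix ι (Fin 1) ℝ
  | 0 => 0
  | n + 1 => A * closedLoopState r n + (r n - Υ r n) • B

theorem strictlyCausal_closedLoopState
    (hΥ : ∀ r r' : ℕ → ℝ, ∀ n : ℕ, (∀ k ≤ n, r k = r' k) → Υ r n = Υ r' n) :
    StrictlyCausal (closedLoopState A B Υ) := by
  intro r r' n h
  induction n with
  | zero => rfl
  | succ n ih =>
    have hle : ∀ k ≤ n, r k = r' k := fun k hk => h k (Nat.lt_succ_of_le hk)
    simp only [closedLoopState, ih fun k hk => hle k hk.le, hle n le_rfl, hΥ r r' n hle]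

theorem closedLoopState_succ_output (C : Matrix (Fin 1) ι ℝ) (r : ℕ → ℝ) (n : ℕ) :
    (C * closedLoopState A B Υ r (n + 1)) 0 0
      = (C * A * closedLoopState A B Υ r n) 0 0 + (C * B) 0 0 * (r n - Υ r n) := by
  rw [closedLoopState, Matrix.mul_add, Matrix.mul_smul, ← Matrix.mul_assoc, Matrix.add_apply,
    Matrix.smul_apply, smul_eq_mul, mul_comm]

end ClosedLoop

/-- `a + halfLatticeGap δ a` is a point of `δ(ℤ + 1/2)` nearest to `a`. -/
noncomputable def halfLatticeGap (δ a : ℝ) : ℝ :=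
  ((round (a / δ - 1 / 2) : ℝ) + 1 / 2) * δ - a

theorem abs_halfLatticeGap_le {δ : ℝ} (hδ : 0 < δ) (a : ℝ) : |halfLatticeGap δ a| ≤ δ / 2 := by
  set t := a / δ - 1 / 2
  have hgap : halfLatticeGap δ a = ((round t : ℝ) - t) * δ := by
    simp only [halfLatticeGap, t]; field_simp; ring
  rw [hgap, abs_mul, abs_of_pos hδ, abs_sub_comm]
  nlinarith [abs_sub_round t]

theorem half_le_abs_int_add_half (l : ℤ) : 1 / 2 ≤ |(l : ℝ) + 1 / 2| := by
  rcases le_or_gt 0 l with hl | hl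
  · have : (0 : ℝ) ≤ l := by exact_mod_cast hl
    rw [abs_of_nonneg (by linarith)]; linarith
  · have : (l : ℝ) ≤ -1 := by exact_mod_cast Int.le_sub_one_of_lt hl
    rw [abs_of_neg (by linarith)]; linarith

theorem half_le_abs_halfLattice_sub_lattice {δ : ℝ} (hδ : 0 ≤ δ) (k j : ℤ) :
    δ / 2 ≤ |((k : ℝ) + 1 / 2) * δ - j * δ| := by
  have h : ((k : ℝ) + 1 / 2) * δ - j * δ = (((k - j : ℤ) : ℝ) + 1 / 2) * δ := by push_cast; ring
  rw [h, abs_mul, abs_of_nonneg hδ]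
  nlinarith [half_le_abs_int_add_half (k - j)]

/-- Lower bound construction: for any causal ADC policy producing outputs in
the lattice `δℤ`, there is an input sequence with values in `[-1,1]` for which
the shaped error satisfies `|q n| ≥ |CB| δ / 2` for all `n ≥ 1`. -/
theorem adversarial_input_lower_bound
    (m : ℕ) (A : Matrix (Fin m) (Fin m) ℝ)
    (B : Matrix (Fin m) (Fin 1) ℝ) (C : Matrix (Fin 1) (Fin m) ℝ)
    (cb : ℝ) (hcb : cb = (C * B) 0 0) (hcb0 : cb ≠ 0)
    (δ : ℝ) (hδ : 0 < δ) (hδ2 : δ ≤ 2)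
    -- a causal ADC policy producing outputs in δℤ
    (Υ : (ℕ → ℝ) → ℕ → ℝ)
    (hcausal : ∀ r r' : ℕ → ℝ, ∀ n : ℕ, (∀ k ≤ n, r k = r' k) → Υ r n = Υ r' n)
    (hlat : ∀ r : ℕ → ℝ, ∀ n : ℕ, ∃ k : ℤ, Υ r n = k * δ) :
    ∃ r : ℕ → ℝ, ∃ x : ℕ → Matrix (Fin m) (Fin 1) ℝ,
      (∀ n, r n ∈ Set.Icc (-1 : ℝ) 1) ∧
      x 0 = 0 ∧
      (∀ n, x (n + 1) = A * x n + (r n - Υ r n) • B) ∧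
      (∀ n ≥ 1, |(C * x n) 0 0| ≥ |cb| * δ / 2) := by
  let a : Matrix (Fin m) (Fin 1) ℝ → ℝ := fun x => cb⁻¹ * (C * A * x) 0 0
  obtain ⟨r, hr⟩ := ((strictlyCausal_closedLoopState A B Υ hcausal).comp
    fun x => halfLatticeGap δ (a x)).exists_fixedPoint
  set x := closedLoopState A B Υ r
  have hrx (n : ℕ) : r n = halfLatticeGap δ (a (x n)) := (congrFun hr n).symm
  refine ⟨r, x, fun n => ?_, rfl, fun n => rfl, ?_⟩
  · have := (hrx n ▸ abs_halfLatticeGap_le hδ (a (x n))).trans (by linarith : δ / 2 ≤ 1)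
    exact abs_le.mp this
  · rintro (_ | n) hn
    · omega
    obtain ⟨j, hj⟩ := hlat r n
    -- the state term `C A x` cancels against the input, leaving a half-lattice point minus `Υ r n`
    have hq : (C * x (n + 1)) 0 0
        = cb * (((round (a (x n) / δ - 1 / 2) : ℝ) + 1 / 2) * δ - j * δ) := by
      have hcba : (C * A * x n) 0 0 = cb * a (x n) := (mul_inv_cancel_left₀ hcb0 _).symm
      rw [closedLoopState_succ_output, ← hcb, hcba, hrx, hj, halfLatticeGap]
      ring
    rw [hq, abs_mul, ge_iff_le, mul_div_assoc]
    exact mul_le_mul_of_nonneg_left (half_le_abs_halfLattice_sub_lattice hδ.le _ _) (abs_nonneg cb)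
end
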